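/- arXiv:1109.5494 — 2 statements merged into one kernel-verified Lean document; each statement's English description precedes it below -/
import Mathlib

section
/- Let a_0, a_1, …, a_n be independent real random variables with mean zero and variance one, and for 0 ≤ j < 2n define d_j = (2n)^{-1/2}[√2·a_0 + (−1)^j·√2·a_n + 2Σ_{k=1}^{n−1} a_k cos(2πjk/(2n))]. Then d_j = d_{2n−j} for 0 < j < 2n, each d_j has mean 0, and for 0 ≤ j, k ≤ n: E[d_j d_k] = 2 if j = k ∈ {0, n}, E[d_j d_k] = 1 if 0 < j = k < n, and E[d_j d_k] = 0 if j ≠ k. -/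
/-!
Write `d_j = ∑_{i=0}^n c_{j,i} a_i`. Independence and mean zero make the `a_i` orthonormal in
`L²`, so `E[d_j d_k] = ∑_i c_{j,i} c_{k,i}`. By `2 cos A cos B = cos (A + B) + cos (A - B)` this
reduces to trapezoidal sums `∑_i w_i cos (π l i / n)` with weights `1, 2, …, 2, 1`, which equal
`2n` when `2n ∣ l` and vanish otherwise: multiplied by `sin (π l / 2n)` the sum telescopes to
`sin (π l) cos (π l / 2n) = 0`. The symmetry `d_j = d_{2n-j}` is the `2π`-periodicity of `cos`.
-/

open MeasureTheory ProbabilityTheory Real Finset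

theorem sin_mul_two_mul_sum_cos (N : ℕ) (x : ℝ) :
    sin x * (2 * ∑ m ∈ range N, cos (2 * m * x) - 1 + cos (2 * N * x)) =
      sin (2 * N * x) * cos x := by
  induction N with
  | zero => simp
  | succ N ih =>
    rw [sum_range_succ]
    push_cast
    rw [show 2 * ((N : ℝ) + 1) * x = 2 * N * x + 2 * x by ring, sin_add, cos_add, sin_two_mul,
      cos_two_mul]
    linear_combination ih - 2 * sin (2 * N * x) * cos x * sin_sq_add_cos_sq x

def dctWeight (n i : ℕ) : ℝ := if i = 0 ∨ i = n then 1 else 2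

theorem sum_range_succ_dctWeight_mul {n : ℕ} (hn : n ≠ 0) (g : ℕ → ℝ) :
    ∑ i ∈ range (n + 1), dctWeight n i * g i = 2 * ∑ i ∈ range n, g i - g 0 + g n := by
  have hlt : ∀ i ∈ range n, dctWeight n i * g i = 2 * g i - if i = 0 then g i else 0 := by
    intro i hi
    have : i ≠ n := (mem_range.1 hi).ne
    by_cases h0 : i = 0
    · simp [dctWeight, h0]
      ring
    · simp [dctWeight, h0, this]
  rw [sum_range_succ, sum_congr rfl hlt, sum_sub_distrib, ← mul_sum, sum_ite_eq',
    if_pos (mem_range.2 (Nat.pos_of_ne_zero hn))]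
  simp [dctWeight]

theorem sum_dctWeight_mul_cos {n : ℕ} (hn : n ≠ 0) (l : ℤ) :
    ∑ i ∈ range (n + 1), dctWeight n i * cos (π * l * i / n) =
      if (2 * n : ℤ) ∣ l then 2 * n else 0 := by
  have hn' : (n : ℝ) ≠ 0 := Nat.cast_ne_zero.2 hn
  rw [sum_range_succ_dctWeight_mul hn]
  split_ifs with hl
  · obtain ⟨t, rfl⟩ := hl
    have hcos : ∀ i : ℕ, cos (π * ((2 * n * t : ℤ) : ℝ) * i / n) = 1 := fun i => by
      rw [show π * ((2 * n * t : ℤ) : ℝ) * i / n = ((t * i : ℤ) : ℝ) * (2 * π) by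
        push_cast; field_simp, cos_int_mul_two_pi]
    simp only [hcos, sum_const, card_range, nsmul_eq_mul, mul_one]
    push_cast
    ring
  · set x := π * l / (2 * n) with hx
    have hsin : sin x ≠ 0 := by
      rw [Ne, sin_eq_zero_iff]
      rintro ⟨m, hm⟩
      refine hl ⟨m, ?_⟩
      rw [hx, eq_div_iff (by positivity)] at hm
      have : π * ((2 * n * m : ℤ) : ℝ) = π * l := by push_cast; linear_combination hm
      exact_mod_cast (mul_left_cancel₀ pi_ne_zero this).symm
    have key := sin_mul_two_mul_sum_cos n x
    have hsin2 : sin (2 * n * x) = 0 := by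
      rw [show 2 * n * x = l * π by rw [hx]; field_simp]
      exact sin_int_mul_pi l
    rw [hsin2, zero_mul] at key
    have hg : ∀ i : ℕ, cos (π * l * i / n) = cos (2 * i * x) := fun i => by
      rw [hx]; congr 1; field_simp
    simp only [hg]
    simpa using (mul_eq_zero.1 key).resolve_left hsin

theorem two_mul_dvd_sub_iff {n j k : ℕ} (hj : j ≤ n) (hk : k ≤ n) :
    (2 * n : ℤ) ∣ j - k ↔ j = k := by
  refine ⟨fun ⟨t, ht⟩ => ?_, fun h => by simp [h]⟩
  have : (j : ℤ) = k := by
    rcases lt_trichotomy t 0 with h | rfl | h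
    · nlinarith
    · linarith
    · nlinarith
  exact_mod_cast this

theorem two_mul_dvd_add_iff {n j k : ℕ} (hj : j ≤ n) (hk : k ≤ n) :
    (2 * n : ℤ) ∣ j + k ↔ j = k ∧ (j = 0 ∨ j = n) := by
  constructor
  · rintro ⟨t, ht⟩
    rcases le_or_gt t 0 with h | h
    · have : (j : ℤ) + k ≤ 0 := by nlinarith
      omega
    · have : 2 * (n : ℤ) ≤ j + k := by nlinarith
      omega
  · rintro ⟨rfl, rfl | rfl⟩
    · simp
    · exact ⟨1, by ring⟩

/-- The coefficient of `a_i` in `d_j` (a DCT-I matrix entry). -/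
noncomputable def dctCoeff (n j i : ℕ) : ℝ :=
  √(2 * dctWeight n i) * cos (π * j * i / n) / √(2 * n)

theorem dctCoeff_mul_dctCoeff (n j k i : ℕ) :
    dctCoeff n j i * dctCoeff n k i =
      dctWeight n i * (cos (π * ((j + k : ℤ) : ℝ) * i / n) + cos (π * ((j - k : ℤ) : ℝ) * i / n))
        / (2 * n) := by
  have hw : 0 ≤ 2 * dctWeight n i := by unfold dctWeight; split_ifs <;> norm_num
  have hj : π * ((j + k : ℤ) : ℝ) * i / n = π * j * i / n + π * k * i / n := by push_cast; ring
  have hk : π * ((j - k : ℤ) : ℝ) * i / n = π * j * i / n - π * k * i / n := by push_cast; ring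
  have hprod : ∀ s t c d : ℝ, s * c / t * (s * d / t) = s * s * (c * d) / (t * t) :=
    fun _ _ _ _ => by ring
  rw [dctCoeff, dctCoeff, hprod, mul_self_sqrt hw, mul_self_sqrt (by positivity), hj, hk,
    cos_add, cos_sub]
  ring

theorem sum_dctCoeff_mul_dctCoeff {n j k : ℕ} (hn : n ≠ 0) (hj : j ≤ n) (hk : k ≤ n) :
    ∑ i ∈ range (n + 1), dctCoeff n j i * dctCoeff n k i =
      if j = k then (if j = 0 ∨ j = n then 2 else 1) else 0 := by
  have hn' : (n : ℝ) ≠ 0 := Nat.cast_ne_zero.2 hn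
  simp only [dctCoeff_mul_dctCoeff, ← sum_div, mul_add, sum_add_distrib,
    sum_dctWeight_mul_cos hn, two_mul_dvd_add_iff hj hk, two_mul_dvd_sub_iff hj hk]
  by_cases hjk : j = k
  · subst hjk
    by_cases hend : j = 0 ∨ j = n
    · simp [hend]
      field_simp
      ring
    · simp [hend, hn]
  · simp [hjk]

section Orthonormal

variable {Ω ι : Type*} [MeasurableSpace Ω] {μ : Measure Ω} {X : ι → Ω → ℝ}

theorem integral_mul_eq_ite_of_iIndepFun [DecidableEq ι] [IsProbabilityMeasure μ]
    (hX : iIndepFun X μ) (hmeas : ∀ i, AEStronglyMeasurable (X i) μ)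
    (hmean : ∀ i, ∫ ω, X i ω ∂μ = 0) (hsq : ∀ i, ∫ ω, X i ω ^ 2 ∂μ = 1) (i j : ι) :
    ∫ ω, X i ω * X j ω ∂μ = if i = j then 1 else 0 := by
  split_ifs with h
  · subst h
    simpa [sq] using hsq i
  · rw [(hX.indepFun h).integral_fun_mul_eq_mul_integral (hmeas i) (hmeas j), hmean i, zero_mul]

variable [Fintype ι]

theorem integral_sum_mul_eq_zero (hX : ∀ i, Integrable (X i) μ)
    (hmean : ∀ i, ∫ ω, X i ω ∂μ = 0) (c : ι → ℝ) :
    ∫ ω, ∑ i, c i * X i ω ∂μ = 0 := by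
  rw [integral_finsetSum _ fun i _ => (hX i).const_mul (c i)]
  simp [integral_const_mul, hmean]

theorem integral_sum_mul_mul_sum_mul [DecidableEq ι] (hX : ∀ i, MemLp (X i) 2 μ)
    (horth : ∀ i j, ∫ ω, X i ω * X j ω ∂μ = if i = j then 1 else 0) (c d : ι → ℝ) :
    ∫ ω, (∑ i, c i * X i ω) * (∑ j, d j * X j ω) ∂μ = ∑ i, c i * d i := by
  have hint : ∀ i j, Integrable (fun ω => c i * d j * (X i ω * X j ω)) μ := fun i j =>
    ((hX i).integrable_mul (hX j)).const_mul _
  calc ∫ ω, (∑ i, c i * X i ω) * (∑ j, d j * X j ω) ∂μ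
      = ∫ ω, ∑ i, ∑ j, c i * d j * (X i ω * X j ω) ∂μ := by
        simp_rw [sum_mul_sum, mul_mul_mul_comm]
    _ = ∑ i, ∑ j, c i * d j * ∫ ω, X i ω * X j ω ∂μ := by
        rw [integral_finsetSum _ fun i _ => integrable_finsetSum _ fun j _ => hint i j]
        simp_rw [integral_finsetSum _ fun j _ => hint _ j, integral_const_mul]
    _ = ∑ i, c i * d i := by simp [horth]

end Orthonormal

theorem sum_range_succ_eq_add_sum_Icc_add {M : Type*} [AddCommMonoid M] {n : ℕ} (hn : n ≠ 0)
    (f : ℕ → M) : ∑ i ∈ range (n + 1), f i = f 0 + ∑ i ∈ Icc 1 (n - 1), f i + f n := by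
  rw [sum_range_succ, range_eq_Ico, sum_eq_sum_Ico_succ_bot (Nat.pos_of_ne_zero hn),
    Icc_sub_one_right_eq_Ico_of_not_isMin (by simpa using hn)]

section Circulant

noncomputable def circulantEigenvalue {Ω : Type*} (n : ℕ) (a : ℕ → Ω → ℝ) (j : ℕ) (ω : Ω) : ℝ :=
  (1 / √(2 * n)) *
    (√2 * a 0 ω + (-1 : ℝ) ^ j * √2 * a n ω
      + 2 * ∑ k ∈ Icc 1 (n - 1), a k ω * cos (2 * π * j * k / (2 * n)))

variable {Ω : Type*} {n : ℕ} (a : ℕ → Ω → ℝ)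

theorem circulantEigenvalue_eq_sum (hn : n ≠ 0) (j : ℕ) (ω : Ω) :
    circulantEigenvalue n a j ω = ∑ i ∈ range (n + 1), dctCoeff n j i * a i ω := by
  have hn' : (n : ℝ) ≠ 0 := Nat.cast_ne_zero.2 hn
  have hmid : ∀ i ∈ Icc 1 (n - 1), dctCoeff n j i * a i ω =
      (1 / √(2 * n)) * (2 * (a i ω * cos (2 * π * j * i / (2 * n)))) := by
    intro i hi
    have hi0 : i ≠ 0 := by grind
    have hin : i ≠ n := by grind
    rw [dctCoeff, dctWeight, if_neg (by tauto), show (2 * 2 : ℝ) = 2 ^ 2 by norm_num,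
      sqrt_sq two_pos.le, show 2 * π * j * i / (2 * n) = π * j * i / n by field_simp]
    ring
  have hlast : cos (π * j * n / n) = (-1) ^ j := by
    rw [mul_div_cancel_right₀ _ hn', mul_comm, cos_nat_mul_pi]
  rw [sum_range_succ_eq_add_sum_Icc_add hn, sum_congr rfl hmid, ← mul_sum, ← mul_sum,
    circulantEigenvalue, dctCoeff, dctCoeff, dctWeight, dctWeight, if_pos (Or.inl rfl),
    if_pos (Or.inr rfl), hlast]
  simp
  ring

theorem circulantEigenvalue_two_mul_sub {j : ℕ} (hj : j ≤ 2 * n) :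
    circulantEigenvalue n a (2 * n - j) = circulantEigenvalue n a j := by
  obtain rfl | hn := eq_or_ne n 0
  · rw [Nat.le_zero.1 hj]
  funext ω
  have hpow : (-1 : ℝ) ^ (2 * n - j) = (-1) ^ j := by
    rw [neg_one_pow_eq_pow_mod_two, neg_one_pow_eq_pow_mod_two (n := j)]
    congr 1
    omega
  have hcos : ∀ k : ℕ, cos (2 * π * ((2 * n - j : ℕ) : ℝ) * k / (2 * n)) =
      cos (2 * π * j * k / (2 * n)) := by
    intro k
    have hn' : (n : ℝ) ≠ 0 := Nat.cast_ne_zero.2 hn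
    rw [Nat.cast_sub hj, ← cos_nat_mul_two_pi_sub _ k]
    congr 1
    push_cast
    field_simp
    ring
  simp only [circulantEigenvalue, hpow, hcos]

end Circulant

theorem circulant_eigenvalue_covariances_general
    {Ω : Type*} [MeasurableSpace Ω] (μ : Measure Ω) [IsProbabilityMeasure μ]
    (n : ℕ) (hn : 1 ≤ n) (a : ℕ → Ω → ℝ)
    (hindep : iIndepFun (fun i : Fin (n + 1) => a i) μ)
    (hL2 : ∀ i ≤ n, MemLp (a i) 2 μ)
    (hmean : ∀ i ≤ n, ∫ ω, a i ω ∂μ = 0)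
    (hvar : ∀ i ≤ n, ∫ ω, (a i ω) ^ 2 ∂μ = 1)
    (d : ℕ → Ω → ℝ)
    (hd : ∀ j < 2 * n, d j = fun ω =>
      (1 / Real.sqrt (2 * n)) *
        (Real.sqrt 2 * a 0 ω + (-1 : ℝ) ^ j * Real.sqrt 2 * a n ω
          + 2 * ∑ k ∈ Finset.Icc 1 (n - 1), a k ω * Real.cos (2 * π * j * k / (2 * n)))) :
    (∀ j, 0 < j → j < 2 * n → d j = d (2 * n - j)) ∧
    (∀ j ≤ n, ∫ ω, d j ω ∂μ = 0) ∧
    (∀ j k : ℕ, j ≤ n → k ≤ n →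
      ∫ ω, d j ω * d k ω ∂μ =
        if j = k then (if j = 0 ∨ j = n then 2 else 1) else 0) := by
  have hn0 : n ≠ 0 := Nat.one_le_iff_ne_zero.1 hn
  have hd' : ∀ j < 2 * n, d j = circulantEigenvalue n a j := hd
  have hX : ∀ i : Fin (n + 1), MemLp (a i) 2 μ := fun i => hL2 i (Nat.lt_succ_iff.1 i.isLt)
  have hrep : ∀ j ≤ n, d j = fun ω => ∑ i : Fin (n + 1), dctCoeff n j i * a i ω := by
    intro j hj
    rw [hd' j (by omega)]
    funext ω
    rw [circulantEigenvalue_eq_sum a hn0,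
      Fin.sum_univ_eq_sum_range (fun i => dctCoeff n j i * a i ω)]
  refine ⟨fun j _ hj => ?_, fun j hj => ?_, fun j k hj hk => ?_⟩
  · rw [hd' j hj, hd' (2 * n - j) (by omega), circulantEigenvalue_two_mul_sub a hj.le]
  · rw [hrep j hj]
    exact integral_sum_mul_eq_zero (fun i => (hX i).integrable one_le_two)
      (fun i => hmean i (by omega)) _
  · have horth := integral_mul_eq_ite_of_iIndepFun hindep (fun i => (hX i).aestronglyMeasurable)
      (fun i => hmean i (by omega)) (fun i => hvar i (by omega))
    rw [hrep j hj, hrep k hk, integral_sum_mul_mul_sum_mul hX horth,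
      Fin.sum_univ_eq_sum_range (fun i => dctCoeff n j i * dctCoeff n k i),
      sum_dctCoeff_mul_dctCoeff hn0 hj hk]

/-- Mean and covariance structure of the eigenvalues `d_j` of the random circulant matrix:
if `a_0, …, a_n` are independent, mean-zero, variance-one real random variables and
`d_j = (2n)^{-1/2}[√2 a_0 + (−1)^j √2 a_n + 2 ∑_{k=1}^{n−1} a_k cos(2πjk/(2n))]`, then
`d_j = d_{2n−j}` for `0 < j < 2n`, each `d_j` has mean zero, and for `0 ≤ j, k ≤ n` the
covariance `E[d_j d_k]` is `2` if `j = k ∈ {0, n}`, `1` if `0 < j = k < n`, and `0` if `j ≠ k`. -/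
theorem circulant_eigenvalue_covariances
    {Ω : Type*} [MeasurableSpace Ω] (μ : Measure Ω) [IsProbabilityMeasure μ]
    (n : ℕ) (hn : 1 ≤ n) (a : ℕ → Ω → ℝ)
    (hmeas : ∀ i, Measurable (a i))
    (hindep : iIndepFun (fun i : Fin (n + 1) => a i) μ)
    (hL2 : ∀ i ≤ n, MemLp (a i) 2 μ)
    (hmean : ∀ i ≤ n, ∫ ω, a i ω ∂μ = 0)
    (hvar : ∀ i ≤ n, ∫ ω, (a i ω) ^ 2 ∂μ = 1)
    (d : ℕ → Ω → ℝ)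
    (hd : ∀ j < 2 * n, d j = fun ω =>
      (1 / Real.sqrt (2 * n)) *
        (Real.sqrt 2 * a 0 ω + (-1 : ℝ) ^ j * Real.sqrt 2 * a n ω
          + 2 * ∑ k ∈ Finset.Icc 1 (n - 1), a k ω * Real.cos (2 * π * j * k / (2 * n)))) :
    (∀ j, 0 < j → j < 2 * n → d j = d (2 * n - j)) ∧
    (∀ j ≤ n, ∫ ω, d j ω ∂μ = 0) ∧
    (∀ j k : ℕ, j ≤ n → k ≤ n →
      ∫ ω, d j ω * d k ω ∂μ =
        if j = k then (if j = 0 ∨ j = n then 2 else 1) else 0) :=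
  circulant_eigenvalue_covariances_general μ n hn a hindep hL2 hmean hvar d hd
end

section
/- Rosenthal-type bound: Let ξ_1,…,ξ_n be independent nonnegative random variables and p ≥ 1. Then there is a universal constant C_p (depending only on p) such that E[(Σ_{i=1}^n ξ_i)^p] ≤ C_p · max( (Σ_{i=1}^n E[ξ_i])^p , Σ_{i=1}^n E[ξ_i^p] ). -/
/-!
Write `S = ∑ ξ_i` and `T_i = S - ξ_i`, which is independent of `ξ_i`. Then
`E[S^p] = ∑ E[ξ_i S^(p-1)]`, and pointwise `ξ_i S^(p-1) ≤ 2^(p-1) (ξ_i T_i^(p-1) + ξ_i^p)`, so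
independence and `T_i ≤ S` give `E[S^p] ≤ 2^(p-1) ((∑ E ξ_i) E[S^(p-1)] + ∑ E[ξ_i^p])`.
Bounding `S^(p-1) ≤ t^(p-1) + S^p / t` and taking `t = 2^p ∑ E ξ_i` absorbs half of `E[S^p]`
into the left-hand side.
-/

open MeasureTheory ProbabilityTheory Finset

namespace Real

lemma self_mul_rpow_sub_one {x p : ℝ} (hx : 0 ≤ x) (hp : p ≠ 0) :
    x * x ^ (p - 1) = x ^ p := by
  conv_rhs => rw [← add_sub_cancel 1 p, rpow_add' hx (by simpa), rpow_one]

lemma rpow_le_one_add_rpow {x q p : ℝ} (hx : 0 ≤ x) (hq : 0 ≤ q) (hqp : q ≤ p) :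
    x ^ q ≤ 1 + x ^ p := by
  rcases le_total x 1 with h | h
  · linarith [rpow_le_one hx h hq, rpow_nonneg hx p]
  · linarith [rpow_le_rpow_of_exponent_le h hqp]

lemma rpow_sub_one_le_add_rpow_div {x t p : ℝ} (hx : 0 ≤ x) (ht : 0 < t) (hp : 1 ≤ p) :
    x ^ (p - 1) ≤ t ^ (p - 1) + x ^ p / t := by
  rcases le_total x t with h | h
  · have : 0 ≤ x ^ p / t := by positivity
    linarith [rpow_le_rpow hx h (by linarith : 0 ≤ p - 1)]
  · rw [rpow_sub_one (ht.trans_le h).ne']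
    linarith [div_le_div_of_nonneg_left (rpow_nonneg hx p) ht h, rpow_nonneg ht.le (p - 1)]

lemma mul_add_rpow_sub_one_le {x y p : ℝ} (hx : 0 ≤ x) (hy : 0 ≤ y) (hp : 1 ≤ p) :
    x * (x + y) ^ (p - 1) ≤ 2 ^ (p - 1) * (x * y ^ (p - 1) + x ^ p) := by
  have hq : 0 ≤ p - 1 := by linarith
  have h2 : 0 ≤ (2 : ℝ) ^ (p - 1) := by positivity
  have hxp : 0 ≤ x ^ p := rpow_nonneg hx p
  have hxy : 0 ≤ x * y ^ (p - 1) := mul_nonneg hx (rpow_nonneg hy _)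
  rcases le_total x y with h | h
  · have : (x + y) ^ (p - 1) ≤ 2 ^ (p - 1) * y ^ (p - 1) := by
      rw [← mul_rpow zero_le_two hy]
      exact rpow_le_rpow (by positivity) (by linarith) hq
    nlinarith [mul_le_mul_of_nonneg_left this hx]
  · have : (x + y) ^ (p - 1) ≤ 2 ^ (p - 1) * x ^ (p - 1) := by
      rw [← mul_rpow zero_le_two hx]
      exact rpow_le_rpow (by positivity) (by linarith) hq
    have := mul_le_mul_of_nonneg_left this hx
    rw [mul_left_comm, self_mul_rpow_sub_one hx (by linarith)] at this
    nlinarith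

end Real

section

variable {Ω : Type*} [MeasurableSpace Ω] {μ : Measure Ω} {p : ℝ}

lemma integrable_rpow_of_integrable_rpow [IsFiniteMeasure μ] {X : Ω → ℝ} {q : ℝ}
    (hX : Measurable X) (hX0 : ∀ ω, 0 ≤ X ω) (hq : 0 ≤ q) (hqp : q ≤ p)
    (hXp : Integrable (fun ω => X ω ^ p) μ) : Integrable (fun ω => X ω ^ q) μ :=
  ((integrable_const 1).add hXp).mono' (by fun_prop) <| ae_of_all _ fun ω => by
    rw [Real.norm_of_nonneg (Real.rpow_nonneg (hX0 ω) q)]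
    exact Real.rpow_le_one_add_rpow (hX0 ω) hq hqp

lemma integrable_rpow_sum {ι : Type*} (s : Finset ι) {f : ι → Ω → ℝ}
    (hf : ∀ i, Measurable (f i)) (hf0 : ∀ i ω, 0 ≤ f i ω) (hp : 1 ≤ p)
    (hfp : ∀ i, Integrable (fun ω => f i ω ^ p) μ) :
    Integrable (fun ω => (∑ i ∈ s, f i ω) ^ p) μ :=
  ((integrable_finsetSum s fun i _ => hfp i).const_mul _).mono'
    ((s.measurable_fun_sum fun i _ => hf i).pow_const p).aestronglyMeasurable <|
    ae_of_all _ fun ω => by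
      rw [Real.norm_of_nonneg (Real.rpow_nonneg (sum_nonneg fun i _ => hf0 i ω) p)]
      exact Real.rpow_sum_le_const_mul_sum_rpow_of_nonneg s hp fun i _ => hf0 i ω

lemma integrable_mul_rpow_sub_one {X Z : Ω → ℝ} (hX : Measurable X) (hZ : Measurable Z)
    (hX0 : ∀ ω, 0 ≤ X ω) (hXZ : ∀ ω, X ω ≤ Z ω) (hp : 1 ≤ p)
    (hZp : Integrable (fun ω => Z ω ^ p) μ) :
    Integrable (fun ω => X ω * Z ω ^ (p - 1)) μ :=
  hZp.mono' (by fun_prop) <| ae_of_all _ fun ω => by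
    have hZ0 : 0 ≤ Z ω := (hX0 ω).trans (hXZ ω)
    rw [Real.norm_of_nonneg (mul_nonneg (hX0 ω) (Real.rpow_nonneg hZ0 _)),
      ← Real.self_mul_rpow_sub_one (p := p) hZ0 (by linarith)]
    exact mul_le_mul_of_nonneg_right (hXZ ω) (Real.rpow_nonneg hZ0 _)

lemma integral_mul_add_rpow_sub_one_le [IsFiniteMeasure μ] {X Y : Ω → ℝ}
    (hX : Measurable X) (hY : Measurable Y) (hXY : IndepFun X Y μ)
    (hX0 : ∀ ω, 0 ≤ X ω) (hY0 : ∀ ω, 0 ≤ Y ω) (hp : 1 ≤ p)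
    (hXp : Integrable (fun ω => X ω ^ p) μ) (hSp : Integrable (fun ω => (X ω + Y ω) ^ p) μ) :
    ∫ ω, X ω * (X ω + Y ω) ^ (p - 1) ∂μ ≤
      2 ^ (p - 1) *
        ((∫ ω, X ω ∂μ) * (∫ ω, (X ω + Y ω) ^ (p - 1) ∂μ) + ∫ ω, X ω ^ p ∂μ) := by
  have hq : 0 ≤ p - 1 := by linarith
  have hS0 : ∀ ω, 0 ≤ X ω + Y ω := fun ω => add_nonneg (hX0 ω) (hY0 ω)
  have hYS : ∀ ω, Y ω ^ (p - 1) ≤ (X ω + Y ω) ^ (p - 1) := fun ω =>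
    Real.rpow_le_rpow (hY0 ω) (by linarith [hX0 ω]) hq
  have hXint : Integrable X μ := by
    simpa using integrable_rpow_of_integrable_rpow hX hX0 zero_le_one hp hXp
  have hSq : Integrable (fun ω => (X ω + Y ω) ^ (p - 1)) μ :=
    integrable_rpow_of_integrable_rpow (hX.add hY) hS0 hq (by linarith) hSp
  have hYq : Integrable (fun ω => Y ω ^ (p - 1)) μ :=
    hSq.mono' (by fun_prop) <| ae_of_all _ fun ω => by
      rw [Real.norm_of_nonneg (Real.rpow_nonneg (hY0 ω) _)]
      exact hYS ω
  have hind : IndepFun X (fun ω => Y ω ^ (p - 1)) μ :=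
    hXY.comp measurable_id (measurable_id.pow_const _)
  have hprod : Integrable (fun ω => X ω * Y ω ^ (p - 1)) μ := hind.integrable_mul hXint hYq
  have hLHS : Integrable (fun ω => X ω * (X ω + Y ω) ^ (p - 1)) μ :=
    integrable_mul_rpow_sub_one hX (hX.add hY) hX0 (fun ω => by linarith [hY0 ω]) hp hSp
  calc ∫ ω, X ω * (X ω + Y ω) ^ (p - 1) ∂μ
      ≤ ∫ ω, 2 ^ (p - 1) * (X ω * Y ω ^ (p - 1) + X ω ^ p) ∂μ :=
        integral_mono hLHS ((hprod.add hXp).const_mul _) fun ω =>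
          Real.mul_add_rpow_sub_one_le (hX0 ω) (hY0 ω) hp
    _ = 2 ^ (p - 1) * ((∫ ω, X ω ∂μ) * (∫ ω, Y ω ^ (p - 1) ∂μ) + ∫ ω, X ω ^ p ∂μ) := by
        rw [integral_const_mul, integral_add hprod hXp,
          hind.integral_fun_mul_eq_mul_integral hXint.1 hYq.1]
    _ ≤ _ := by
        gcongr
        · exact integral_nonneg hX0
        · exact hYS

lemma integral_rpow_sum_le [IsFiniteMeasure μ] {ι : Type*} [Fintype ι] {ξ : ι → Ω → ℝ}
    (hξ : ∀ i, Measurable (ξ i)) (hind : iIndepFun ξ μ) (hξ0 : ∀ i ω, 0 ≤ ξ i ω) (hp : 1 ≤ p)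
    (hξp : ∀ i, Integrable (fun ω => ξ i ω ^ p) μ) :
    ∫ ω, (∑ i, ξ i ω) ^ p ∂μ ≤
      2 ^ (p - 1) * ((∑ i, ∫ ω, ξ i ω ∂μ) * ∫ ω, (∑ i, ξ i ω) ^ (p - 1) ∂μ +
        ∑ i, ∫ ω, ξ i ω ^ p ∂μ) := by
  classical
  have hSp := integrable_rpow_sum univ hξ hξ0 hp hξp
  have hsplit : ∀ i ω, ∑ j, ξ j ω = ξ i ω + ∑ j ∈ univ.erase i, ξ j ω := fun i ω =>
    (add_sum_erase _ _ (mem_univ i)).symm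
  have hterm : ∀ i, ∫ ω, ξ i ω * (∑ j, ξ j ω) ^ (p - 1) ∂μ ≤
      2 ^ (p - 1) *
        ((∫ ω, ξ i ω ∂μ) * ∫ ω, (∑ j, ξ j ω) ^ (p - 1) ∂μ + ∫ ω, ξ i ω ^ p ∂μ) := by
    intro i
    have hrest := (hind.indepFun_finsetSum_of_notMem hξ (notMem_erase i univ)).symm
    rw [sum_fn] at hrest
    simp only [hsplit i] at hSp ⊢
    exact integral_mul_add_rpow_sub_one_le (hξ i) (by fun_prop) hrest (hξ0 i)
      (fun ω => sum_nonneg fun j _ => hξ0 j ω) hp (hξp i) hSp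
  calc ∫ ω, (∑ i, ξ i ω) ^ p ∂μ
      = ∫ ω, ∑ i, ξ i ω * (∑ j, ξ j ω) ^ (p - 1) ∂μ := by
        simp only [← sum_mul, Real.self_mul_rpow_sub_one (sum_nonneg fun i _ => hξ0 i _)
          (by linarith : p ≠ 0)]
    _ = ∑ i, ∫ ω, ξ i ω * (∑ j, ξ j ω) ^ (p - 1) ∂μ :=
        integral_finsetSum _ fun i _ => integrable_mul_rpow_sub_one (hξ i) (by fun_prop)
          (hξ0 i) (fun ω => single_le_sum (fun j _ => hξ0 j ω) (mem_univ i)) hp hSp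
    _ ≤ ∑ i, 2 ^ (p - 1) * ((∫ ω, ξ i ω ∂μ) * ∫ ω, (∑ j, ξ j ω) ^ (p - 1) ∂μ +
          ∫ ω, ξ i ω ^ p ∂μ) := sum_le_sum fun i _ => hterm i
    _ = _ := by rw [← mul_sum, sum_add_distrib, ← sum_mul]

lemma integral_rpow_sub_one_le [IsProbabilityMeasure μ] {Z : Ω → ℝ} (hZ : Measurable Z)
    (hZ0 : ∀ ω, 0 ≤ Z ω) (hp : 1 ≤ p) (hZp : Integrable (fun ω => Z ω ^ p) μ) {t : ℝ}
    (ht : 0 < t) :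
    ∫ ω, Z ω ^ (p - 1) ∂μ ≤ t ^ (p - 1) + (∫ ω, Z ω ^ p ∂μ) / t := by
  calc ∫ ω, Z ω ^ (p - 1) ∂μ ≤ ∫ ω, (t ^ (p - 1) + Z ω ^ p / t) ∂μ :=
        integral_mono
          (integrable_rpow_of_integrable_rpow hZ hZ0 (by linarith) (by linarith) hZp)
          ((integrable_const _).add (hZp.div_const t)) fun ω =>
            Real.rpow_sub_one_le_add_rpow_div (hZ0 ω) ht hp
    _ = t ^ (p - 1) + (∫ ω, Z ω ^ p ∂μ) / t := by
        rw [integral_add (integrable_const _) (hZp.div_const t), integral_const, integral_div]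
        simp

end

lemma le_rpow_add_of_forall_le_rpow_sub_one_add_div {A m v c p : ℝ} (hA : 0 ≤ A)
    (hm : 0 ≤ m) (hc : 0 < c) (hp : 1 ≤ p) (h : ∀ t > 0, A ≤ c * (m * (t ^ (p - 1) + A / t) + v)) :
    A ≤ (2 * c * m) ^ p + 2 * c * v := by
  rcases hm.eq_or_lt with rfl | hm
  · have := h 1 one_pos
    rw [mul_zero, Real.zero_rpow (by linarith)]
    nlinarith
  · have ht : 0 < 2 * c * m := by positivity
    have := h _ ht
    have hpow : c * m * (2 * c * m) ^ (p - 1) = (2 * c * m) ^ p / 2 := by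
      rw [← Real.self_mul_rpow_sub_one (p := p) ht.le (by linarith)]
      ring
    have hdiv : c * (m * (A / (2 * c * m))) = A / 2 := by
      field_simp
    nlinarith

/-- Rosenthal's inequality: for every `p ≥ 1` there is a universal constant `C_p` such that
for any finite family of independent nonnegative random variables `ξ_1, …, ξ_n` with finite
`p`-th moments, `E[(∑ ξ_i)^p] ≤ C_p · max((∑ E ξ_i)^p, ∑ E[ξ_i^p])`. -/
theorem rosenthal_inequality (p : ℝ) (hp : 1 ≤ p) :
    ∃ C : ℝ, ∀ (Ω : Type) (_ : MeasurableSpace Ω) (μ : Measure Ω)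
      (_ : IsProbabilityMeasure μ) (n : ℕ) (ξ : Fin n → Ω → ℝ),
      (∀ i, Measurable (ξ i)) →
      iIndepFun ξ μ →
      (∀ i ω, 0 ≤ ξ i ω) →
      (∀ i, Integrable (fun ω => ξ i ω ^ p) μ) →
      (∫ ω, (∑ i, ξ i ω) ^ p ∂μ) ≤
        C * max ((∑ i, ∫ ω, ξ i ω ∂μ) ^ p) (∑ i, ∫ ω, ξ i ω ^ p ∂μ) := by
  refine ⟨(2 ^ p) ^ p + 2 ^ p, fun Ω _ μ _ n ξ hξ hind hξ0 hξp => ?_⟩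
  have hS : Measurable fun ω => ∑ i, ξ i ω := by fun_prop
  have hS0 : ∀ ω, 0 ≤ ∑ i, ξ i ω := fun ω => sum_nonneg fun i _ => hξ0 i ω
  have hSp := integrable_rpow_sum univ hξ hξ0 hp hξp
  have hm : 0 ≤ ∑ i, ∫ ω, ξ i ω ∂μ := sum_nonneg fun i _ => integral_nonneg (hξ0 i)
  have hbound := le_rpow_add_of_forall_le_rpow_sub_one_add_div (c := 2 ^ (p - 1))
    (integral_nonneg fun ω => Real.rpow_nonneg (hS0 ω) p) hm (by positivity) hp fun t ht =>
      (integral_rpow_sum_le hξ hind hξ0 hp hξp).trans <| by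
        gcongr
        exact integral_rpow_sub_one_le hS hS0 hp hSp ht
  have h2c : 2 * (2 : ℝ) ^ (p - 1) = 2 ^ p := by
    rw [← Real.self_mul_rpow_sub_one (p := p) zero_le_two (by linarith)]
  rw [h2c, Real.mul_rpow (by positivity) hm] at hbound
  set M := max ((∑ i, ∫ ω, ξ i ω ∂μ) ^ p) (∑ i, ∫ ω, ξ i ω ^ p ∂μ)
  calc _ ≤ _ := hbound
    _ ≤ (2 ^ p) ^ p * M + 2 ^ p * M := by
      gcongr
      · exact le_max_left _ _
      · exact le_max_right _ _
    _ = _ := by ring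
end
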